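/- Let p be an odd prime and F: V → F_{p^m} a vectorial dual-bent function satisfying Condition I with sign ε. Let D = {x ∈ V : F(x) is a nonsquare in F_{p^m}}, K = |D| = (p^n − ε p^{n/2})(p^m − 1)/(2 p^m), and for b ∈ V let c_b = (1/√K)(χ_b(x))_{x ∈ D} where χ_b(x) = ζ_p^{⟨b,x⟩}. Then for any two distinct b_1, b_2 ∈ V, the inner product c_{b_1} c_{b_2}^H equals either −((p^m−1)/(2 p^m K)) ε p^{n/2} or ((p^m+1)/(2 p^m K)) ε p^{n/2}; specifically, with b = b_1 − b_2, the first value occurs iff F^*(b) = 0 or F^*(b) is a nonzero square, and the second iff F^*(b) is a nonsquare. -/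

import Mathlib

open Complex Finset

/-- `ζ_p^k` for `k ∈ Z/p`. -/
noncomputable def zetaP (p : ℕ) (k : ZMod p) : ℂ :=
  Complex.exp (2 * Real.pi * Complex.I * (k.val : ℂ) / p)

/-!
Write `q = p^m`, `ψ(y) = ζ_p^{Tr y}`, `η` for the quadratic character of `K` and
`P = ε p^{n/2}`. Pointwise, `2·[y nonsquare] = 1 - [y = 0] - η(y)`, so `2 Σ_{x ∈ D} χ_b(x)`
splits into the full sum `Σ_x χ_b(x)` (equal to `p^n` or `0`), the sum of `χ_b` over the zero
set of `F`, and the hybrid sum `Σ_x η(F x) χ_b(x)`. Additive orthogonality turns `q` times the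
second into `Σ_c W_{F_c}(-b)`, and a Gauss-sum twist turns `G(η, ψ)` times the third into
`Σ_c η(c) W_{F_c}(-b)`. By Condition I, `W_{F_c}(-b) = P ψ(c^{1-d} F^*(b))` for `c ≠ 0`, and
since `c ↦ c^{1-d}` permutes `K` and preserves `η` (`d - 1` is odd and prime to `q - 1`), the
two sums become `P (q [F^*(b) = 0] - 1)` and `P η(F^*(b))`. Taking `b = 0` gives `|D|`, and
`b = b₁ - b₂ ≠ 0` gives the inner products.
-/

section ZetaP

variable {p : ℕ} [NeZero p]

lemma zetaP_eq_stdAddChar (k : ZMod p) : zetaP p k = ZMod.stdAddChar k := by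
  rw [ZMod.stdAddChar_apply, ZMod.toCircle_apply, zetaP]

lemma zetaP_zero : zetaP p 0 = 1 := by
  rw [zetaP_eq_stdAddChar, AddChar.map_zero_eq_one]

lemma zetaP_add (a b : ZMod p) : zetaP p (a + b) = zetaP p a * zetaP p b := by
  simp only [zetaP_eq_stdAddChar, AddChar.map_add_eq_mul]

lemma conj_zetaP (a : ZMod p) : (starRingEnd ℂ) (zetaP p a) = zetaP p (-a) := by
  rw [zetaP_eq_stdAddChar, zetaP_eq_stdAddChar, ZMod.stdAddChar_apply, ZMod.stdAddChar_apply,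
    AddChar.map_neg_eq_inv, Circle.coe_inv_eq_conj]

lemma stdAddChar_compAddMonoidHom_ne_one {A : Type*} [AddGroup A] {f : A →+ ZMod p}
    (hf : f ≠ 0) : ZMod.stdAddChar.compAddMonoidHom f ≠ 1 := by
  obtain ⟨x, hx⟩ := DFunLike.ne_iff.mp hf
  exact AddChar.ne_one_iff.mpr
    ⟨x, (ZMod.injective_stdAddChar.ne_iff' (AddChar.map_zero_eq_one _)).mpr hx⟩

lemma sum_zetaP_linearMap_eq_zero {V : Type*} [AddCommGroup V] [Module (ZMod p) V] [Fintype V]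
    {f : V →ₗ[ZMod p] ZMod p} (hf : f ≠ 0) : ∑ x, zetaP p (f x) = 0 := by
  simp only [zetaP_eq_stdAddChar]
  refine AddChar.sum_eq_zero_of_ne_one
    (stdAddChar_compAddMonoidHom_ne_one (f := f.toAddMonoidHom) fun h => ?_)
  exact hf (LinearMap.toAddMonoidHom_injective h)

end ZetaP

noncomputable def traceChar (p : ℕ) [Fact p.Prime] (K : Type*) [Field K] [Algebra (ZMod p) K] :
    AddChar K ℂ :=
  ZMod.stdAddChar.compAddMonoidHom (Algebra.trace (ZMod p) K).toAddMonoidHom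

section TraceChar
variable (p : ℕ) [Fact p.Prime] {K : Type*} [Field K] [Algebra (ZMod p) K]

lemma traceChar_apply (y : K) : traceChar p K y = zetaP p (Algebra.trace (ZMod p) K y) :=
  (zetaP_eq_stdAddChar _).symm

lemma traceChar_isPrimitive [Finite K] : (traceChar p K).IsPrimitive := by
  have : FiniteDimensional (ZMod p) K := Module.Finite.of_finite
  refine AddChar.IsPrimitive.of_ne_one (stdAddChar_compAddMonoidHom_ne_one fun h => ?_)
  exact Algebra.trace_ne_zero (ZMod p) K (LinearMap.toAddMonoidHom_injective h)

lemma ringChar_eq_of_algebra_zmod : ringChar K = p :=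
  ringChar.eq_iff.mpr (charP_of_injective_algebraMap' (ZMod p) p)

end TraceChar

noncomputable def quadraticCharC (K : Type*) [Field K] [Fintype K] [DecidableEq K] :
    MulChar K ℂ :=
  (quadraticChar K).ringHomComp (Int.castRingHom ℂ)

section QuadraticCharC
variable {K : Type*} [Field K] [Fintype K] [DecidableEq K]

lemma quadraticCharC_apply (a : K) : quadraticCharC K a = quadraticChar K a := rfl

lemma quadraticCharC_isQuadratic : (quadraticCharC K).IsQuadratic :=
  quadraticChar_isQuadratic K |>.comp _

lemma quadraticCharC_ne_one (hK : ringChar K ≠ 2) : quadraticCharC K ≠ 1 :=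
  (MulChar.ringHomComp_ne_one_iff Int.cast_injective).mpr (quadraticChar_ne_one hK)

lemma two_mul_sum_filter_not_isSquare {V : Type*} [Fintype V] (F : V → K) (g : V → ℂ) :
    2 * ∑ x ∈ univ.filter (fun x => ¬IsSquare (F x)), g x
      = ∑ x, g x - ∑ x ∈ univ.filter (fun x => F x = 0), g x
        - ∑ x, quadraticCharC K (F x) * g x := by
  simp_rw [Finset.sum_filter, Finset.mul_sum, ← Finset.sum_sub_distrib, quadraticCharC_apply]
  refine Finset.sum_congr rfl fun x _ => ?_
  rcases eq_or_ne (F x) 0 with h0 | h0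
  · simp [h0]
  by_cases hsq : IsSquare (F x)
  · simp [hsq, h0, (quadraticChar_one_iff_isSquare h0).mpr hsq]
  · simp [hsq, h0, quadraticChar_neg_one_iff_not_isSquare.mpr hsq]
    ring

end QuadraticCharC

section CharacterSums
variable {V K : Type*} [Fintype V] [Field K] [Fintype K]

lemma card_mul_sum_filter_eq_zero [DecidableEq K] {ψ : AddChar K ℂ} (hψ : ψ.IsPrimitive)
    (F : V → K) (g : V → ℂ) :
    (Fintype.card K : ℂ) * ∑ x ∈ univ.filter (fun x => F x = 0), g x
      = ∑ c, ∑ x, ψ (c * F x) * g x := by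
  rw [Finset.sum_comm]
  simp only [← Finset.sum_mul, AddChar.sum_mulShift _ hψ]
  rw [Finset.sum_filter, Finset.mul_sum]
  refine Finset.sum_congr rfl fun x _ => ?_
  split_ifs <;> simp

lemma sum_mul_mulShift_of_isQuadratic {η : MulChar K ℂ} (hη : η.IsQuadratic) (hη1 : η ≠ 1)
    (ψ : AddChar K ℂ) (y : K) : ∑ c, η c * ψ (c * y) = η y * gaussSum η ψ := by
  rcases eq_or_ne y 0 with rfl | hy
  · simp [MulChar.sum_eq_zero_of_ne_one hη1, MulChar.map_zero]
  · have h := gaussSum_mulShift_eq η ψ (Units.mk0 y hy)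
    rw [hη.inv, Units.val_mk0] at h
    simp_rw [gaussSum, AddChar.mulShift_apply, mul_comm y] at h
    exact h

lemma gaussSum_mul_sum_mulChar {η : MulChar K ℂ} (hη : η.IsQuadratic) (hη1 : η ≠ 1)
    (ψ : AddChar K ℂ) (F : V → K) (g : V → ℂ) :
    gaussSum η ψ * ∑ x, η (F x) * g x = ∑ c, η c * ∑ x, ψ (c * F x) * g x := by
  simp_rw [Finset.mul_sum, Finset.sum_comm (γ := K), ← mul_assoc, ← Finset.sum_mul,
    sum_mul_mulShift_of_isQuadratic hη hη1, mul_comm]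

end CharacterSums

section Exponent
variable {K : Type*} [Field K]

lemma zpow_one_sub_eq_inv_pow {d : ℕ} (hd : 1 ≤ d) (c : K) :
    c ^ ((1 : ℤ) - d) = (c ^ (d - 1))⁻¹ := by
  rw [show (1 : ℤ) - d = -((d - 1 : ℕ) : ℤ) by omega, zpow_neg, zpow_natCast]

lemma pow_injective_of_coprime [Fintype K] {k : ℕ} (hk : k ≠ 0)
    (hcop : k.Coprime (Fintype.card K - 1)) : Function.Injective fun c : K => c ^ k := by
  intro a b hab
  dsimp only at hab
  rcases eq_or_ne b 0 with rfl | hb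
  · rwa [zero_pow hk, pow_eq_zero_iff hk] at hab
  have ha : a ≠ 0 := by
    rintro rfl
    exact hb (pow_eq_zero_iff hk |>.mp (by rw [← hab, zero_pow hk]))
  have hk1 : (a / b) ^ k = 1 := by rw [div_pow, hab, div_self (pow_ne_zero _ hb)]
  have hq1 : (a / b) ^ (Fintype.card K - 1) = 1 :=
    FiniteField.pow_card_sub_one_eq_one _ (div_ne_zero ha hb)
  have := pow_gcd_eq_one.mpr ⟨hk1, hq1⟩
  rwa [hcop, pow_one, div_eq_one_iff_eq hb] at this

lemma bijective_zpow_one_sub [Fintype K] {d : ℕ} (hd : 2 ≤ d)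
    (hcop : (d - 1).Coprime (Fintype.card K - 1)) :
    Function.Bijective fun c : K => c ^ ((1 : ℤ) - d) := by
  simp_rw [zpow_one_sub_eq_inv_pow (by omega : 1 ≤ d)]
  exact Finite.injective_iff_bijective.mp
    (inv_injective.comp (pow_injective_of_coprime (by omega) hcop))

lemma MulChar.IsQuadratic.map_zpow_one_sub {R : Type*} [CommRing R] {η : MulChar K R}
    (hη : η.IsQuadratic) {d : ℕ} (hd : Even d) (hd1 : 1 ≤ d) (c : K) :
    η (c ^ ((1 : ℤ) - d)) = η c := by
  rw [zpow_one_sub_eq_inv_pow hd1, ← MulChar.inv_apply', hη.inv, map_pow]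
  have hodd : Odd (d - 1) := Nat.Even.sub_odd hd1 hd odd_one
  rcases hη c with h | h | h <;> simp [h, hodd.neg_one_pow, hodd.pos.ne']

end Exponent

section Walsh

/- `hW` is Condition I for the twisted sums `Σ_x ψ(c F(x)) g(x)`, with `σ c` in the role of
`c^{1-d}` and `y` in that of `F^*(b)`. -/
variable {V K : Type*} [Fintype V] [Field K] [Fintype K]
  {ψ : AddChar K ℂ} {F : V → K} {g : V → ℂ} {σ : K → K} {P : ℂ} {y : K}

lemma card_mul_sum_filter_eq_zero_of_walsh [DecidableEq K] (hψ : ψ.IsPrimitive)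
    (hσ : σ.Bijective) (hσ0 : σ 0 = 0) (hW : ∀ c ≠ 0, ∑ x, ψ (c * F x) * g x = P * ψ (σ c * y)) :
    (Fintype.card K : ℂ) * ∑ x ∈ univ.filter (fun x => F x = 0), g x
      = ∑ x, g x + P * ((if y = 0 then (Fintype.card K : ℂ) else 0) - 1) := by
  have hsum : ∑ c ∈ univ.erase 0, ψ (σ c * y)
      = (if y = 0 then (Fintype.card K : ℂ) else 0) - 1 := by
    rw [Finset.sum_erase_eq_sub (mem_univ 0), hσ0, zero_mul, AddChar.map_zero_eq_one,
      Fintype.sum_bijective σ hσ _ (fun c => ψ (c * y)) fun _ => rfl,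
      AddChar.sum_mulShift _ hψ, Nat.cast_ite, Nat.cast_zero]
  rw [card_mul_sum_filter_eq_zero hψ, ← Finset.add_sum_erase _ _ (mem_univ 0), ← hsum,
    Finset.mul_sum]
  congr 1
  · simp
  · exact Finset.sum_congr rfl fun c hc => hW c (ne_of_mem_erase hc)

lemma sum_mulChar_mul_of_walsh {η : MulChar K ℂ} (hη : η.IsQuadratic) (hη1 : η ≠ 1)
    (hψ : ψ.IsPrimitive) (hσ : σ.Bijective) (hησ : ∀ c, η (σ c) = η c)
    (hW : ∀ c ≠ 0, ∑ x, ψ (c * F x) * g x = P * ψ (σ c * y)) :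
    ∑ x, η (F x) * g x = P * η y := by
  have hG : gaussSum η ψ ≠ 0 :=
    gaussSum_ne_zero_of_nontrivial (Nat.cast_ne_zero.mpr Fintype.card_ne_zero) hη1 hψ
  refine mul_left_cancel₀ hG ?_
  calc gaussSum η ψ * ∑ x, η (F x) * g x
      = ∑ c, η c * ∑ x, ψ (c * F x) * g x := gaussSum_mul_sum_mulChar hη hη1 ψ F g
    _ = ∑ c, P * (η (σ c) * ψ (σ c * y)) := by
        refine Finset.sum_congr rfl fun c _ => ?_
        rcases eq_or_ne c 0 with rfl | hc
        · simp [hησ, MulChar.map_zero]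
        · rw [hW c hc, hησ]; ring
    _ = P * ∑ c, η c * ψ (c * y) := by
        rw [← Finset.mul_sum,
          Fintype.sum_bijective σ hσ _ (fun c => η c * ψ (c * y)) fun _ => rfl]
    _ = gaussSum η ψ * (P * η y) := by
        rw [sum_mul_mulShift_of_isQuadratic hη hη1]; ring

lemma two_mul_card_mul_sum_filter_not_isSquare_of_walsh [DecidableEq K] (hK : ringChar K ≠ 2)
    (hψ : ψ.IsPrimitive) (hσ : σ.Bijective) (hσ0 : σ 0 = 0)
    (hησ : ∀ c, quadraticCharC K (σ c) = quadraticCharC K c)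
    (hW : ∀ c ≠ 0, ∑ x, ψ (c * F x) * g x = P * ψ (σ c * y)) :
    2 * (Fintype.card K : ℂ) * ∑ x ∈ univ.filter (fun x => ¬IsSquare (F x)), g x
      = ((Fintype.card K : ℂ) - 1) * ∑ x, g x
        - P * ((if y = 0 then (Fintype.card K : ℂ) else 0) - 1)
        - Fintype.card K * (P * quadraticCharC K y) := by
  linear_combination (Fintype.card K : ℂ) * two_mul_sum_filter_not_isSquare F g
    - card_mul_sum_filter_eq_zero_of_walsh hψ hσ hσ0 hW
    - (Fintype.card K : ℂ) * sum_mulChar_mul_of_walsh quadraticCharC_isQuadratic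
        (quadraticCharC_ne_one hK) hψ hσ hησ hW

end Walsh

lemma one_div_mul_eq_of_two_mul_eq {𝕜 : Type*} [Field 𝕜] {N q S c P : 𝕜} (hq : 2 * q ≠ 0)
    (h : 2 * q * S = c * P) : 1 / N * S = c / (2 * q * N) * P := by
  have hS : S = c * P / (2 * q) := by
    rw [eq_div_iff hq]
    linear_combination h
  rw [hS]
  ring

section Codebook
variable {p : ℕ} [Fact p.Prime] {V K : Type*} [AddCommGroup V] [Module (ZMod p) V]
  [Field K] [Algebra (ZMod p) K] {B : V →ₗ[ZMod p] V →ₗ[ZMod p] ZMod p}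

lemma sum_zetaP_mul_conj (s : Finset V) (b₁ b₂ : V) :
    ∑ x ∈ s, zetaP p (B b₁ x) * (starRingEnd ℂ) (zetaP p (B b₂ x))
      = ∑ x ∈ s, zetaP p (B (b₁ - b₂) x) := by
  refine Finset.sum_congr rfl fun x _ => ?_
  rw [conj_zetaP, ← zetaP_add, map_sub, LinearMap.sub_apply, sub_eq_add_neg]

variable [Fintype V] {F Fstar : V → K} {P : ℂ} {d : ℕ}
  (hFstarneg : ∀ a : V, Fstar (-a) = Fstar a)
  (hWalsh : ∀ c : K, c ≠ 0 → ∀ a : V,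
    ∑ x : V, zetaP p (Algebra.trace (ZMod p) K (c * F x) - B a x)
      = P * zetaP p (Algebra.trace (ZMod p) K (c ^ ((1 : ℤ) - d) * Fstar a)))

include hFstarneg hWalsh

lemma sum_traceChar_mul_zetaP_of_walsh (b : V) (c : K) (hc : c ≠ 0) :
    ∑ x, traceChar p K (c * F x) * zetaP p (B b x)
      = P * traceChar p K (c ^ ((1 : ℤ) - d) * Fstar b) := by
  rw [traceChar_apply, ← hFstarneg, ← hWalsh c hc]
  refine Finset.sum_congr rfl fun x _ => ?_
  rw [traceChar_apply, map_neg, LinearMap.neg_apply, sub_neg_eq_add, zetaP_add]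

variable [Fintype K] [DecidableEq K] (hp : p ≠ 2) (hd : 2 ≤ d) (hdeven : Even d)
  (hgcd : (d - 1).Coprime (Fintype.card K - 1))

include hp hd hdeven hgcd

lemma two_mul_card_mul_sum_filter_not_isSquare_zetaP (b : V) :
    2 * (Fintype.card K : ℂ)
        * ∑ x ∈ univ.filter (fun x => ¬IsSquare (F x)), zetaP p (B b x)
      = ((Fintype.card K : ℂ) - 1) * ∑ x, zetaP p (B b x)
        - P * ((if Fstar b = 0 then (Fintype.card K : ℂ) else 0) - 1)
        - Fintype.card K * (P * quadraticCharC K (Fstar b)) :=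
  two_mul_card_mul_sum_filter_not_isSquare_of_walsh
    (by rwa [ringChar_eq_of_algebra_zmod p]) (traceChar_isPrimitive p)
    (bijective_zpow_one_sub hd hgcd) (zero_zpow _ (by omega))
    (quadraticCharC_isQuadratic.map_zpow_one_sub hdeven (by omega))
    (sum_traceChar_mul_zetaP_of_walsh hFstarneg hWalsh b)

lemma two_mul_card_mul_sum_filter_not_isSquare_zetaP_of_ne_zero
    (hBnd : ∀ v, (∀ w, B v w = 0) → v = 0) {b : V} (hb : b ≠ 0) :
    2 * (Fintype.card K : ℂ)
        * ∑ x ∈ univ.filter (fun x => ¬IsSquare (F x)), zetaP p (B b x)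
      = P * (1 - if Fstar b = 0 then (Fintype.card K : ℂ) else 0)
        - Fintype.card K * (P * quadraticCharC K (Fstar b)) := by
  have hB : B b ≠ 0 := fun h => hb (hBnd b fun w => by rw [h, LinearMap.zero_apply])
  rw [two_mul_card_mul_sum_filter_not_isSquare_zetaP hFstarneg hWalsh hp hd hdeven hgcd,
    sum_zetaP_linearMap_eq_zero hB]
  ring

lemma two_mul_card_mul_card_filter_not_isSquare (hFstar0 : Fstar 0 = 0) :
    2 * (Fintype.card K : ℂ) * (univ.filter (fun x => ¬IsSquare (F x))).card
      = ((Fintype.card K : ℂ) - 1) * (Fintype.card V - P) := by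
  have h := two_mul_card_mul_sum_filter_not_isSquare_zetaP hFstarneg hWalsh hp hd hdeven hgcd 0
  simp only [map_zero, LinearMap.zero_apply, zetaP_zero, sum_const, card_univ, nsmul_eq_mul,
    mul_one, hFstar0, ↓reduceIte, MulChar.map_zero, mul_zero, sub_zero] at h
  linear_combination h

end Codebook

theorem codebook_inner_product_condI_general
    (p n m d : ℕ) [Fact p.Prime] (hp : p ≠ 2)
    (V : Type*) [AddCommGroup V] [Module (ZMod p) V] [Fintype V]
    (hV : Fintype.card V = p ^ n)
    (K : Type*) [Field K] [Fintype K] [DecidableEq K] [Algebra (ZMod p) K]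
    (hK : Fintype.card K = p ^ m)
    (B : V →ₗ[ZMod p] V →ₗ[ZMod p] ZMod p)
    (hBnd : ∀ v, (∀ w, B v w = 0) → v = 0)
    (F Fstar : V → K)
    (ε : ℤ)
    (hd : 2 ≤ d) (hdeven : Even d)
    (hgcd : Nat.gcd (d - 1) (p ^ m - 1) = 1)
    (hFstar0 : Fstar 0 = 0)
    (hFstarneg : ∀ a : V, Fstar (-a) = Fstar a)
    (hWalsh : ∀ c : K, c ≠ 0 → ∀ a : V,
      ∑ x : V, zetaP p (Algebra.trace (ZMod p) K (c * F x) - B a x)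
        = (ε : ℂ) * (p : ℂ) ^ (n / 2)
            * zetaP p (Algebra.trace (ZMod p) K (c ^ ((1 : ℤ) - d) * Fstar a)))
    (b₁ b₂ : V) (hb : b₁ ≠ b₂) :
    (2 * (p : ℤ) ^ m *
        ((Finset.univ.filter (fun x : V => ¬ IsSquare (F x))).card : ℤ)
      = ((p : ℤ) ^ n - ε * (p : ℤ) ^ (n / 2)) * ((p : ℤ) ^ m - 1))
    ∧ ((Fstar (b₁ - b₂) = 0 ∨
          (IsSquare (Fstar (b₁ - b₂)) ∧ Fstar (b₁ - b₂) ≠ 0)) →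
      (1 / (((Finset.univ.filter (fun x : V => ¬ IsSquare (F x))).card : ℂ))) *
          ∑ x ∈ Finset.univ.filter (fun x : V => ¬ IsSquare (F x)),
            zetaP p (B b₁ x) * (starRingEnd ℂ) (zetaP p (B b₂ x))
        = -((((p : ℂ) ^ m - 1) /
              (2 * (p : ℂ) ^ m *
                ((Finset.univ.filter (fun x : V => ¬ IsSquare (F x))).card : ℂ)))
            * (ε : ℂ) * (p : ℂ) ^ (n / 2)))
    ∧ (¬ IsSquare (Fstar (b₁ - b₂)) →
      (1 / (((Finset.univ.filter (fun x : V => ¬ IsSquare (F x))).card : ℂ))) *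
          ∑ x ∈ Finset.univ.filter (fun x : V => ¬ IsSquare (F x)),
            zetaP p (B b₁ x) * (starRingEnd ℂ) (zetaP p (B b₂ x))
        = (((p : ℂ) ^ m + 1) /
              (2 * (p : ℂ) ^ m *
                ((Finset.univ.filter (fun x : V => ¬ IsSquare (F x))).card : ℂ)))
            * (ε : ℂ) * (p : ℂ) ^ (n / 2)) := by
  have hgcd' : (d - 1).Coprime (Fintype.card K - 1) := by rwa [hK]
  have hq : (Fintype.card K : ℂ) = (p : ℂ) ^ m := by exact_mod_cast hK
  have hq0 : 2 * (p : ℂ) ^ m ≠ 0 :=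
    mul_ne_zero two_ne_zero (pow_ne_zero _ (Nat.cast_ne_zero.mpr (Fact.out : p.Prime).ne_zero))
  have hD := two_mul_card_mul_card_filter_not_isSquare hFstarneg hWalsh hp hd hdeven hgcd' hFstar0
  have hS := two_mul_card_mul_sum_filter_not_isSquare_zetaP_of_ne_zero hFstarneg hWalsh hp hd
    hdeven hgcd' hBnd (sub_ne_zero.mpr hb)
  simp only [hq, hV, Nat.cast_pow] at hD hS
  rw [sum_zetaP_mul_conj]
  refine ⟨?_, fun h => ?_, fun h => ?_⟩
  · apply Int.cast_injective (α := ℂ)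
    push_cast
    linear_combination hD
  · rw [one_div_mul_eq_of_two_mul_eq hq0 (c := 1 - (p : ℂ) ^ m)
      (P := ε * (p : ℂ) ^ (n / 2)) ?_]
    · ring
    rcases h with h0 | ⟨hsq, hne⟩
    · simp only [h0, ↓reduceIte, MulChar.map_zero] at hS
      linear_combination hS
    · simp only [if_neg hne, quadraticCharC_apply,
        (quadraticChar_one_iff_isSquare hne).mpr hsq] at hS
      linear_combination hS
  · have hne : Fstar (b₁ - b₂) ≠ 0 := fun h0 => h (h0 ▸ IsSquare.zero)
    rw [one_div_mul_eq_of_two_mul_eq hq0 (c := 1 + (p : ℂ) ^ m)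
      (P := ε * (p : ℂ) ^ (n / 2)) ?_]
    · ring
    simp only [if_neg hne, quadraticCharC_apply,
      quadraticChar_neg_one_iff_not_isSquare.mpr h] at hS
    linear_combination hS

/-- Under Condition I with sign `ε`, let `D = {x ∈ V : F(x) nonsquare}`,
`K₀ = |D| = (p^n - ε p^{n/2})(p^m - 1)/(2 p^m)`, and for `b ∈ V` let
`c_b = (1/√K₀)(χ_b(x))_{x ∈ D}`.  For distinct `b₁, b₂`, the inner product
`c_{b₁} c_{b₂}^H = (1/K₀) Σ_{x ∈ D} χ_{b₁}(x) conj(χ_{b₂}(x))` equals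
`-((p^m-1)/(2 p^m K₀)) ε p^{n/2}` if `F^*(b₁-b₂) = 0` or a nonzero square,
and `((p^m+1)/(2 p^m K₀)) ε p^{n/2}` if `F^*(b₁-b₂)` is a nonsquare. -/
theorem codebook_inner_product_condI
    (p n m d : ℕ) [Fact p.Prime] (hp : p ≠ 2)
    (hm : 1 ≤ m) (hn : Even n) (hmn : 2 * m ≤ n)
    (V : Type*) [AddCommGroup V] [Module (ZMod p) V] [Fintype V]
    (hV : Fintype.card V = p ^ n)
    (K : Type*) [Field K] [Fintype K] [DecidableEq K] [Algebra (ZMod p) K]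
    (hK : Fintype.card K = p ^ m)
    (B : V →ₗ[ZMod p] V →ₗ[ZMod p] ZMod p)
    (hBsym : ∀ v w, B v w = B w v)
    (hBnd : ∀ v, (∀ w, B v w = 0) → v = 0)
    (F Fstar : V → K)
    (ε : ℤ) (hε : ε = 1 ∨ ε = -1)
    (hd : 2 ≤ d) (hdeven : Even d)
    (hgcd : Nat.gcd (d - 1) (p ^ m - 1) = 1)
    (hF0 : F 0 = 0) (hFstar0 : Fstar 0 = 0)
    (hFstarneg : ∀ a : V, Fstar (-a) = Fstar a)
    (hWalsh : ∀ c : K, c ≠ 0 → ∀ a : V,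
      ∑ x : V, zetaP p (Algebra.trace (ZMod p) K (c * F x) - B a x)
        = (ε : ℂ) * (p : ℂ) ^ (n / 2)
            * zetaP p (Algebra.trace (ZMod p) K (c ^ ((1 : ℤ) - d) * Fstar a)))
    (b₁ b₂ : V) (hb : b₁ ≠ b₂) :
    (2 * (p : ℤ) ^ m *
        ((Finset.univ.filter (fun x : V => ¬ IsSquare (F x))).card : ℤ)
      = ((p : ℤ) ^ n - ε * (p : ℤ) ^ (n / 2)) * ((p : ℤ) ^ m - 1))
    ∧ ((Fstar (b₁ - b₂) = 0 ∨
          (IsSquare (Fstar (b₁ - b₂)) ∧ Fstar (b₁ - b₂) ≠ 0)) →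
      (1 / (((Finset.univ.filter (fun x : V => ¬ IsSquare (F x))).card : ℂ))) *
          ∑ x ∈ Finset.univ.filter (fun x : V => ¬ IsSquare (F x)),
            zetaP p (B b₁ x) * (starRingEnd ℂ) (zetaP p (B b₂ x))
        = -((((p : ℂ) ^ m - 1) /
              (2 * (p : ℂ) ^ m *
                ((Finset.univ.filter (fun x : V => ¬ IsSquare (F x))).card : ℂ)))
            * (ε : ℂ) * (p : ℂ) ^ (n / 2)))
    ∧ (¬ IsSquare (Fstar (b₁ - b₂)) →
      (1 / (((Finset.univ.filter (fun x : V => ¬ IsSquare (F x))).card : ℂ))) *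
          ∑ x ∈ Finset.univ.filter (fun x : V => ¬ IsSquare (F x)),
            zetaP p (B b₁ x) * (starRingEnd ℂ) (zetaP p (B b₂ x))
        = (((p : ℂ) ^ m + 1) /
              (2 * (p : ℂ) ^ m *
                ((Finset.univ.filter (fun x : V => ¬ IsSquare (F x))).card : ℂ)))
            * (ε : ℂ) * (p : ℂ) ^ (n / 2)) :=
  codebook_inner_product_condI_general p n m d hp V hV K hK B hBnd F Fstar ε hd hdeven hgcd hFstar0
    hFstarneg hWalsh b₁ b₂ hb
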